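/- Let p be a prime, G a group, and A a subgroup of the center of G. If the quotient G/A belongs to the class 𝒢(p), then A is topologically p-embedded in G: for every subgroup B of A of finite p-power index there is a normal subgroup N of G of finite p-power index with N ∩ A ≤ B. -/

import Mathlib

/-!
Common definitions for formalizing "Cohomology and profinite topologies for solvable
groups of finite rank" (K. Lorensen).

Group cohomology is defined via inhomogeneous cochains.  The continuous cohomology of the
pro-`p` (resp. profinite) completion of `G` with coefficients in a finite discrete module is
the direct limit, over the normal subgroups `N` of finite `p`-power (resp. finite) index
acting trivially on the module, of the cohomology of the quotients `G ⧸ N`; accordingly, the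
statement that the completion map induces an isomorphism on cohomology is rendered as:
the canonical (inflation) maps from this directed system to `H^*(G, M)` are jointly
surjective, and any class of the system killed in `H^*(G, M)` is killed at a deeper level of
the system.
-/

open Function TensorProduct

universe u v

namespace GoodProfinite

variable {G H : Type u} {M : Type v}

/-- The (multiplicative) group structure on `AddAut M` of the older library, where
`e₁ * e₂ = e₂.trans e₁`; the installed library makes `AddAut M` an additive group instead. -/
instance addAutGroupOld (A : Type v) [Add A] : Group (AddAut A) where
  mul g h := AddEquiv.trans h g
  one := AddEquiv.refl _
  inv := AddEquiv.symm
  mul_assoc _ _ _ := rfl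
  one_mul _ := rfl
  mul_one _ := rfl
  inv_mul_cancel := AddEquiv.self_trans_symm

/-- The differential on inhomogeneous cochains of a group `G` with coefficients in a
`G`-module `M` (the action given by `ρ : G →* AddAut M`). -/
def cochainD [Group G] [AddCommGroup M] (ρ : G →* AddAut M) (n : ℕ) :
    ((Fin n → G) → M) →+ ((Fin (n + 1) → G) → M) :=
  AddMonoidHom.mk'
    (fun f g =>
      ρ (g 0) (f fun i => g i.succ) +
        ∑ j : Fin (n + 1), (-1 : ℤ) ^ ((j : ℕ) + 1) • f (Fin.contractNth j (· * ·) g))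
    (by
      intro a b
      funext g
      simp only [Pi.add_apply, map_add, smul_add, Finset.sum_add_distrib]
      abel)

/-- The `n`-cocycles. -/
def cocycleGroup [Group G] [AddCommGroup M] (ρ : G →* AddAut M) (n : ℕ) :
    AddSubgroup ((Fin n → G) → M) :=
  (cochainD ρ n).ker

/-- The `n`-coboundaries. -/
def coboundaryGroup [Group G] [AddCommGroup M] (ρ : G →* AddAut M) :
    (n : ℕ) → AddSubgroup ((Fin n → G) → M)
  | 0 => ⊥
  | n + 1 => (cochainD ρ n).range

/-- The `n`-th group cohomology of `G` with coefficients in the `G`-module `M`. -/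
def groupCoh [Group G] [AddCommGroup M] (ρ : G →* AddAut M) (n : ℕ) : Type (max u v) :=
  cocycleGroup ρ n ⧸ (coboundaryGroup ρ n).addSubgroupOf (cocycleGroup ρ n)

instance [Group G] [AddCommGroup M] (ρ : G →* AddAut M) (n : ℕ) :
    AddCommGroup (groupCoh ρ n) :=
  inferInstanceAs (AddCommGroup (_ ⧸ _))

/-- Precomposition of cochains with a group homomorphism. -/
def precompCochain [Group G] [Group H] [AddCommGroup M] (f : G →* H) (n : ℕ) :
    ((Fin n → H) → M) →+ ((Fin n → G) → M) :=
  AddMonoidHom.mk' (fun c g => c fun i => f (g i)) (fun _ _ => rfl)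

lemma comp_contractNth [Group G] [Group H] (f : G →* H) {n : ℕ} (j : Fin (n + 1))
    (g : Fin (n + 1) → G) :
    (fun k => f (Fin.contractNth j (· * ·) g k)) =
      Fin.contractNth j (· * ·) fun i => f (g i) := by
  funext k
  unfold Fin.contractNth
  split_ifs <;> simp [map_mul]

lemma cochainD_precomp [Group G] [Group H] [AddCommGroup M] (f : G →* H)
    (ρ : H →* AddAut M) (ρ' : G →* AddAut M) (hcomp : ∀ g, ρ' g = ρ (f g)) (n : ℕ)
    (c : (Fin n → H) → M) :
    cochainD ρ' n (precompCochain f n c) = precompCochain f (n + 1) (cochainD ρ n c) := by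
  funext g
  show ρ' (g 0) (c fun i => f (g i.succ)) +
      ∑ j : Fin (n + 1), (-1 : ℤ) ^ ((j : ℕ) + 1) •
        c (fun i => f (Fin.contractNth j (· * ·) g i)) =
    ρ (f (g 0)) (c fun i => f (g i.succ)) +
      ∑ j : Fin (n + 1), (-1 : ℤ) ^ ((j : ℕ) + 1) •
        c (Fin.contractNth j (· * ·) fun i => f (g i))
  rw [hcomp]
  congr 1
  refine Finset.sum_congr rfl fun j _ => ?_
  rw [comp_contractNth]

/-- The map on cocycles induced by a group homomorphism with compatible actions. -/
def cocycleMap [Group G] [Group H] [AddCommGroup M] (f : G →* H) (ρ : H →* AddAut M)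
    (ρ' : G →* AddAut M) (hcomp : ∀ g, ρ' g = ρ (f g)) (n : ℕ) :
    cocycleGroup ρ n →+ cocycleGroup ρ' n :=
  AddMonoidHom.codRestrict ((precompCochain f n).comp (cocycleGroup ρ n).subtype) _
    (fun x => by
      have hx : cochainD ρ n x.1 = 0 := x.2
      show precompCochain f n x.1 ∈ (cochainD ρ' n).ker
      rw [AddMonoidHom.mem_ker, cochainD_precomp f ρ ρ' hcomp, hx, map_zero])

/-- The map `H^n(H, M) → H^n(G, M)` on group cohomology induced by a group homomorphism
`f : G →* H` and compatible actions (`ρ' = ρ ∘ f`); e.g. inflation maps. -/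
def cohMap [Group G] [Group H] [AddCommGroup M] (f : G →* H) (ρ : H →* AddAut M)
    (ρ' : G →* AddAut M) (hcomp : ∀ g, ρ' g = ρ (f g)) (n : ℕ) :
    groupCoh ρ n →+ groupCoh ρ' n :=
  QuotientAddGroup.map _ _ (cocycleMap f ρ ρ' hcomp n)
    (by
      intro x hx
      rw [AddSubgroup.mem_addSubgroupOf] at hx
      rw [AddSubgroup.mem_comap, AddSubgroup.mem_addSubgroupOf]
      match n, x, hx with
      | 0, x, hx =>
          have : x.1 = 0 := hx
          show (precompCochain f 0) x.1 ∈ (⊥ : AddSubgroup _)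
          rw [this, map_zero]
          exact AddSubgroup.mem_bot.mpr rfl
      | (m + 1), x, hx =>
          obtain ⟨b, hb⟩ := hx
          show (precompCochain f (m + 1)) x.1 ∈ (cochainD ρ' m).range
          exact ⟨precompCochain f m b, by rw [cochainD_precomp f ρ ρ' hcomp, hb]⟩)

/-- The action of `G ⧸ N` on `M` induced by an action of `G` on which `N` acts trivially. -/
def quotAut [Group G] [AddCommGroup M] (ρ : G →* AddAut M) (N : Subgroup G) [N.Normal]
    (h : ∀ x ∈ N, ρ x = 1) : G ⧸ N →* AddAut M :=
  QuotientGroup.lift N ρ h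

/-- The natural projection `G ⧸ N' →* G ⧸ N` when `N' ≤ N`. -/
def quotMapHom [Group G] (N N' : Subgroup G) [N.Normal] [N'.Normal] (hle : N' ≤ N) :
    G ⧸ N' →* G ⧸ N :=
  QuotientGroup.map N' N (MonoidHom.id G) fun _ hx => hle hx

lemma quotAut_comp_quotMap [Group G] [AddCommGroup M] (ρ : G →* AddAut M)
    (N N' : Subgroup G) [N.Normal] [N'.Normal] (hle : N' ≤ N) (h : ∀ x ∈ N, ρ x = 1) :
    ∀ x : G ⧸ N', quotAut ρ N' (fun g hg => h g (hle hg)) x =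
      quotAut ρ N h (quotMapHom N N' hle x) := fun x =>
  QuotientGroup.induction_on x fun _ => rfl

/-- The canonical map from the continuous cohomology of the pro-`p` completion of `G`
(the direct limit over normal subgroups of finite `p`-power index acting trivially on `M`
of the cohomology of the corresponding quotients) to `H^*(G, M)` is an isomorphism in
every degree. -/
def ProPCompletionCohIso (p : ℕ) (G : Type u) [Group G] (M : Type v) [AddCommGroup M]
    (ρ : G →* AddAut M) : Prop :=
  ∀ n : ℕ,
    (∀ x : groupCoh ρ n,
      ∃ (N : Subgroup G) (hN : N.Normal),
        haveI := hN
        ∃ (_ : ∃ k, N.index = p ^ k) (h1 : ∀ y ∈ N, ρ y = 1)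
          (z : groupCoh (quotAut ρ N h1) n),
          cohMap (QuotientGroup.mk' N) (quotAut ρ N h1) ρ (fun _ => rfl) n z = x) ∧
    (∀ (N : Subgroup G) (hN : N.Normal),
      haveI := hN
      ∀ (_ : ∃ k, N.index = p ^ k) (h1 : ∀ y ∈ N, ρ y = 1)
        (z : groupCoh (quotAut ρ N h1) n),
        cohMap (QuotientGroup.mk' N) (quotAut ρ N h1) ρ (fun _ => rfl) n z = 0 →
        ∃ (N' : Subgroup G) (hN' : N'.Normal),
          haveI := hN'
          ∃ (_ : ∃ k, N'.index = p ^ k) (hle : N' ≤ N),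
            cohMap (quotMapHom N N' hle) (quotAut ρ N h1)
              (quotAut ρ N' fun g hg => h1 g (hle hg))
              (quotAut_comp_quotMap ρ N N' hle h1) n z = 0)

/-- The analogue of `ProPCompletionCohIso` for the full profinite completion: the canonical
map from the continuous cohomology of the profinite completion of `G` to `H^*(G, M)` is an
isomorphism in every degree. -/
def ProfiniteCompletionCohIso (G : Type u) [Group G] (M : Type v) [AddCommGroup M]
    (ρ : G →* AddAut M) : Prop :=
  ∀ n : ℕ,
    (∀ x : groupCoh ρ n,
      ∃ (N : Subgroup G) (hN : N.Normal),
        haveI := hN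
        ∃ (_ : N.FiniteIndex) (h1 : ∀ y ∈ N, ρ y = 1)
          (z : groupCoh (quotAut ρ N h1) n),
          cohMap (QuotientGroup.mk' N) (quotAut ρ N h1) ρ (fun _ => rfl) n z = x) ∧
    (∀ (N : Subgroup G) (hN : N.Normal),
      haveI := hN
      ∀ (_ : N.FiniteIndex) (h1 : ∀ y ∈ N, ρ y = 1)
        (z : groupCoh (quotAut ρ N h1) n),
        cohMap (QuotientGroup.mk' N) (quotAut ρ N h1) ρ (fun _ => rfl) n z = 0 →
        ∃ (N' : Subgroup G) (hN' : N'.Normal),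
          haveI := hN'
          ∃ (_ : N'.FiniteIndex) (hle : N' ≤ N),
            cohMap (quotMapHom N N' hle) (quotAut ρ N h1)
              (quotAut ρ N' fun g hg => h1 g (hle hg))
              (quotAut_comp_quotMap ρ N N' hle h1) n z = 0)

/-- The class `𝒢(p)`: the pro-`p` completion map `G → Ĝ_p` induces an isomorphism
`H^*(Ĝ_p, M) → H^*(G, M)` for every discrete `Ĝ_p`-module `M` of finite `p`-power order,
i.e. for every `G`-module `M` of finite `p`-power order whose action factors through a
quotient of finite `p`-power index. -/
def InGp (p : ℕ) (G : Type u) [Group G] : Prop :=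
  ∀ (M : Type u) [AddCommGroup M] (ρ : G →* AddAut M),
    (∃ k, Nat.card M = p ^ k) →
    (∃ N : Subgroup G, N.Normal ∧ (∃ k, N.index = p ^ k) ∧ ∀ y ∈ N, ρ y = 1) →
    ProPCompletionCohIso p G M ρ

/-- The class `𝒢*(p)`: the profinite completion map `G → Ĝ` induces an isomorphism
`H^*(Ĝ, M) → H^*(G, M)` for every discrete `Ĝ`-module `M` of finite `p`-power order,
i.e. for every `G`-module `M` of finite `p`-power order whose action factors through a
quotient of finite index. -/
def InGpStar (p : ℕ) (G : Type u) [Group G] : Prop :=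
  ∀ (M : Type u) [AddCommGroup M] (ρ : G →* AddAut M),
    (∃ k, Nat.card M = p ^ k) →
    (∃ N : Subgroup G, N.Normal ∧ N.FiniteIndex ∧ ∀ y ∈ N, ρ y = 1) →
    ProfiniteCompletionCohIso G M ρ

/-- The class `ℱ𝒮`: groups having only finitely many subgroups of each finite index. -/
def InFS (G : Type u) [Group G] : Prop :=
  ∀ n : ℕ, n ≠ 0 → {H : Subgroup G | H.index = n}.Finite

/-- The class `ℱℋ`: groups `G` such that `H^n(G, M)` is finite for every finite
`G`-module `M` and every `n ≥ 0`. -/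
def InFH (G : Type u) [Group G] : Prop :=
  ∀ (M : Type u) [AddCommGroup M] [Finite M] (ρ : G →* AddAut M) (n : ℕ),
    Finite (groupCoh ρ n)

/-- An abelian group has finite torsion-free rank iff `ℚ ⊗ A` is finite dimensional. -/
def HasFiniteTorsionFreeRank (A : Type v) [CommGroup A] : Prop :=
  Module.Finite ℚ (ℚ ⊗[ℤ] (Additive A))

/-- An abelian group has finite `p`-rank (its `p`-torsion subgroup is a direct sum of
finitely many cyclic and quasicyclic groups) iff its `p`-socle is finite. -/
def HasFinitePRank (p : ℕ) (A : Type v) [CommGroup A] : Prop :=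
  {a : A | a ^ p = 1}.Finite

/-- `G` has finite abelian section rank: every abelian section of `G` has finite
torsion-free rank and finite `p`-rank for every prime `p`. -/
def IsFAR (G : Type u) [Group G] : Prop :=
  ∀ (H : Subgroup G) (A : Type u) [CommGroup A] (φ : H →* A), Surjective φ →
    HasFiniteTorsionFreeRank A ∧ ∀ p : ℕ, p.Prime → HasFinitePRank p A

/-- The Prüfer `p`-group `C_{p^∞}`: the subgroup of `p`-power order elements of `ℚ/ℤ`. -/
def pruferSubgroup (p : ℕ) : AddSubgroup (AddCircle (1 : ℚ)) where
  carrier := {x | ∃ n : ℕ, p ^ n • x = 0}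
  zero_mem' := ⟨0, smul_zero _⟩
  add_mem' := by
    rintro a b ⟨m, hm⟩ ⟨n, hn⟩
    refine ⟨m + n, ?_⟩
    have ha : p ^ (m + n) • a = 0 := by rw [pow_add, mul_comm, mul_smul, hm, smul_zero]
    have hb : p ^ (m + n) • b = 0 := by rw [pow_add, mul_smul, hn, smul_zero]
    rw [smul_add, ha, hb, add_zero]
  neg_mem' := by
    rintro a ⟨m, hm⟩
    exact ⟨m, by rw [smul_neg, hm, neg_zero]⟩

/-- `G` has a subgroup isomorphic to the Prüfer `p`-group `C_{p^∞}`. -/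
def HasPruferSubgroup (p : ℕ) (G : Type u) [Group G] : Prop :=
  ∃ H : Subgroup G, Nonempty (H ≃* Multiplicative (pruferSubgroup p))

/-- `G` has a section (quotient of a subgroup) isomorphic to the Prüfer `p`-group, i.e.
`p ∈ spec G`. -/
def HasPruferSection (p : ℕ) (G : Type u) [Group G] : Prop :=
  ∃ (H : Subgroup G) (φ : H →* Multiplicative (pruferSubgroup p)), Surjective φ

/-- `H ≤_t G`: `H` is topologically embedded in `G`, i.e. the profinite topology of `G`
induces the full profinite topology on `H`. -/
def TopEmbedded {G : Type u} [Group G] (H : Subgroup G) : Prop :=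
  ∀ K : Subgroup H, K.Normal → K.FiniteIndex →
    ∃ L : Subgroup G, L.Normal ∧ L.FiniteIndex ∧ L.subgroupOf H ≤ K

/-- `H ≤_{t(p)} G`: `H` is topologically `p`-embedded in `G`, i.e. the pro-`p` topology of
`G` induces the full pro-`p` topology on `H`. -/
def TopPEmbedded (p : ℕ) {G : Type u} [Group G] (H : Subgroup G) : Prop :=
  ∀ K : Subgroup H, K.Normal → (∃ k, K.index = p ^ k) →
    ∃ L : Subgroup G, L.Normal ∧ (∃ k, L.index = p ^ k) ∧ L.subgroupOf H ≤ K

/-- The pro-`p` topology on `G` is homogeneous: every subgroup of `G` is topologically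
`p`-embedded in `G`. -/
def PHomogeneous (p : ℕ) (G : Type u) [Group G] : Prop :=
  ∀ H : Subgroup G, TopPEmbedded p H

/-- The `p`-residual of `G`: the kernel of the pro-`p` completion map, i.e. the
intersection of all normal subgroups of finite `p`-power index. -/
def pResidual (p : ℕ) (G : Type u) [Group G] : Subgroup G :=
  ⨅ (N : Subgroup G) (_ : N.Normal) (_ : ∃ k, N.index = p ^ k), N

/-- A `p'`-group: every element has finite order coprime to `p`. -/
def IsPPrimeGroup (p : ℕ) (G : Type u) [Group G] : Prop :=
  ∀ g : G, IsOfFinOrder g ∧ Nat.Coprime (orderOf g) p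

/-- The profinite topology on `G`, with the cosets of the normal subgroups of finite index
as basic open sets. -/
def profiniteTopology (G : Type u) [Group G] : TopologicalSpace G :=
  ⨅ (N : Subgroup G) (_ : N.Normal) (_ : N.FiniteIndex),
    TopologicalSpace.induced (QuotientGroup.mk (s := N)) ⊥

lemma normal_of_le_center {G : Type u} [Group G] {A : Subgroup G}
    (hA : A ≤ Subgroup.center G) : A.Normal :=
  ⟨fun a ha g => by
    have hc := (Subgroup.mem_center_iff.mp (hA ha)) g
    have : g * a * g⁻¹ = a := by rw [hc]; group
    rwa [this]⟩

/-
Push the central extension `A → G → G ⧸ A` forward along `A → A ⧸ K`. Its class in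
`H²(G ⧸ A, A ⧸ K)` (trivial action, coefficients a finite `p`-group) is, as `G ⧸ A` is in
`𝒢(p)`, inflated from a finite `p`-quotient `(G ⧸ A) ⧸ N`: the pushed-out factor set is
`c + δb` with `c` a cocycle on `(G ⧸ A) ⧸ N`. Correcting the section coordinates of `G` by `b`
gives a homomorphism from `G` to the extension of `(G ⧸ A) ⧸ N` by `A ⧸ K` with cocycle `c`, a
finite `p`-group. On `A` this homomorphism is `A → A ⧸ K` up to a constant, so its kernel has
`p`-power index and meets `A` inside `K`.
-/

section Cocycles

variable {Q : Type*} [Group Q] {M : Type*} [AddCommGroup M]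

lemma cochainD_one_apply (ρ : Q →* AddAut M) (b : (Fin 1 → Q) → M) (q r : Q) :
    cochainD ρ 1 b ![q, r] = ρ q (b ![r]) - b ![q * r] + b ![q] := by
  have h0 : Fin.contractNth (0 : Fin 2) (· * ·) ![q, r] = ![q * r] := by
    funext i; fin_cases i; rfl
  have h1 : Fin.contractNth (1 : Fin 2) (· * ·) ![q, r] = ![q] := by
    funext i; fin_cases i; rfl
  have hs : (fun i : Fin 1 => ![q, r] i.succ) = ![r] := by
    funext i; fin_cases i; rfl
  change ρ q (b fun i => ![q, r] i.succ) +
    ∑ j : Fin 2, (-1 : ℤ) ^ ((j : ℕ) + 1) • b (Fin.contractNth j (· * ·) ![q, r]) = _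
  rw [Fin.sum_univ_two, h0, h1, hs]
  norm_num
  abel

lemma cochainD_two_apply (ρ : Q →* AddAut M) (c : (Fin 2 → Q) → M) (q r t : Q) :
    cochainD ρ 2 c ![q, r, t] =
      ρ q (c ![r, t]) - c ![q * r, t] + c ![q, r * t] - c ![q, r] := by
  have h0 : Fin.contractNth (0 : Fin 3) (· * ·) ![q, r, t] = ![q * r, t] := by
    funext i; fin_cases i <;> rfl
  have h1 : Fin.contractNth (1 : Fin 3) (· * ·) ![q, r, t] = ![q, r * t] := by
    funext i; fin_cases i <;> rfl
  have h2 : Fin.contractNth (2 : Fin 3) (· * ·) ![q, r, t] = ![q, r] := by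
    funext i; fin_cases i <;> rfl
  have hs : (fun i : Fin 2 => ![q, r, t] i.succ) = ![r, t] := by
    funext i; fin_cases i <;> rfl
  change ρ q (c fun i => ![q, r, t] i.succ) +
    ∑ j : Fin 3, (-1 : ℤ) ^ ((j : ℕ) + 1) • c (Fin.contractNth j (· * ·) ![q, r, t]) = _
  rw [Fin.sum_univ_three, h0, h1, h2, hs]
  norm_num
  abel

/-- The 2-cocycle identity for the trivial action of `Q` on `M`. -/
def IsTwoCocycle (c : Q → Q → M) : Prop :=
  ∀ q r t : Q, c (q * r) t + c q r = c r t + c q (r * t)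

lemma mem_cocycleGroup_two_iff {ρ : Q →* AddAut M} (hρ : ∀ q m, ρ q m = m)
    (c : (Fin 2 → Q) → M) :
    c ∈ cocycleGroup ρ 2 ↔ IsTwoCocycle fun q r => c ![q, r] := by
  have hpt : ∀ g : Fin 3 → Q, g = ![g 0, g 1, g 2] := fun g => by
    funext i; fin_cases i <;> rfl
  change cochainD ρ 2 c = 0 ↔ _
  refine ⟨fun h q r t => ?_, fun h => funext fun g => ?_⟩
  · have := congrFun h ![q, r, t]
    rw [cochainD_two_apply, hρ, Pi.zero_apply] at this
    exact eq_of_sub_eq_zero (by rw [← neg_eq_zero, ← this]; abel)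
  · have := h (g 0) (g 1) (g 2)
    rw [hpt g, cochainD_two_apply, hρ, Pi.zero_apply, ← sub_eq_zero.mpr this.symm]
    abel

end Cocycles

section CocycleExt

variable {Q : Type*} [Group Q] {M : Type*} [AddCommGroup M]

def CocycleExt (c : Q → Q → M) (_ : IsTwoCocycle c) : Type _ := M × Q

namespace IsTwoCocycle

variable {c : Q → Q → M}

lemma apply_one_left (hc : IsTwoCocycle c) (q : Q) : c 1 q = c 1 1 := by
  have := hc 1 1 q
  simp only [one_mul] at this
  exact (add_left_cancel this).symm

lemma apply_one_right (hc : IsTwoCocycle c) (q : Q) : c q 1 = c 1 1 := by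
  have := hc q 1 1
  simp only [mul_one] at this
  exact add_right_cancel this

lemma apply_inv_left (hc : IsTwoCocycle c) (q : Q) : c q⁻¹ q = c q q⁻¹ := by
  have := hc q q⁻¹ q
  rw [mul_inv_cancel, inv_mul_cancel, hc.apply_one_left q, hc.apply_one_right q,
    add_comm] at this
  exact (add_right_cancel this).symm

end IsTwoCocycle

variable {c : Q → Q → M} (hc : IsTwoCocycle c)

instance : Group (CocycleExt c hc) where
  mul x y := (x.1 + y.1 + c x.2 y.2, x.2 * y.2)
  one := (-c 1 1, 1)
  inv x := (-x.1 - c x.2 x.2⁻¹ - c 1 1, x.2⁻¹)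
  mul_assoc x y z := by
    refine Prod.ext ?_ (mul_assoc x.2 y.2 z.2)
    change x.1 + y.1 + c x.2 y.2 + z.1 + c (x.2 * y.2) z.2 =
      x.1 + (y.1 + z.1 + c y.2 z.2) + c x.2 (y.2 * z.2)
    have := hc x.2 y.2 z.2
    rw [add_right_comm _ z.1, add_assoc _ _ (c _ _), add_comm (c x.2 y.2), this]
    abel
  one_mul x := by
    refine Prod.ext ?_ (one_mul x.2)
    change -c 1 1 + x.1 + c 1 x.2 = x.1
    rw [hc.apply_one_left x.2]; abel
  mul_one x := by
    refine Prod.ext ?_ (mul_one x.2)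
    change x.1 + -c 1 1 + c x.2 1 = x.1
    rw [hc.apply_one_right x.2]; abel
  inv_mul_cancel x := by
    refine Prod.ext ?_ (inv_mul_cancel x.2)
    change -x.1 - c x.2 x.2⁻¹ - c 1 1 + x.1 + c x.2⁻¹ x.2 = -c 1 1
    rw [hc.apply_inv_left]; abel

lemma CocycleExt.card : Nat.card (CocycleExt c hc) = Nat.card M * Nat.card Q :=
  Nat.card_prod M Q

end CocycleExt

theorem InGp.exists_eq_inflation_add_coboundary {p : ℕ} {Q : Type u} [Group Q]
    (hQ : InGp p Q) {M : Type u} [AddCommGroup M] (hM : ∃ k, Nat.card M = p ^ k)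
    {f : Q → Q → M} (hf : IsTwoCocycle f) :
    ∃ (N : Subgroup Q) (_ : N.Normal), (∃ k, N.index = p ^ k) ∧
      ∃ (c : Q ⧸ N → Q ⧸ N → M) (_ : IsTwoCocycle c) (b : Q → M),
        ∀ q r, f q r = c q r + (b r - b (q * r) + b q) := by
  let ρ : Q →* AddAut M := 1
  have hf' :=
    (mem_cocycleGroup_two_iff (ρ := ρ) (fun _ _ => rfl) fun g => f (g 0) (g 1)).mpr hf
  obtain ⟨N, hN, hidx, h1, z, hz⟩ :=
    (hQ M ρ hM ⟨⊤, inferInstance, ⟨0, Subgroup.index_top⟩, fun _ _ => rfl⟩ 2).1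
      (QuotientAddGroup.mk ⟨_, hf'⟩)
  obtain ⟨c, rfl⟩ := QuotientAddGroup.mk_surjective z
  have hρN : ∀ x m, quotAut ρ N h1 x m = m := fun x m =>
    QuotientGroup.induction_on x fun _ => rfl
  refine ⟨N, hN, hidx, fun x y => c.1 ![x, y], (mem_cocycleGroup_two_iff hρN c.1).mp c.2, ?_⟩
  change QuotientAddGroup.mk (cocycleMap (QuotientGroup.mk' N) _ ρ _ 2 c) = _ at hz
  rw [QuotientAddGroup.eq, AddSubgroup.mem_addSubgroupOf] at hz
  obtain ⟨b, hb⟩ := hz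
  refine ⟨fun q => b ![q], fun q r => ?_⟩
  have hπ : (fun i => (![q, r] i : Q ⧸ N)) = ![(q : Q ⧸ N), r] := by
    funext i; fin_cases i <;> rfl
  have hqr : cochainD ρ 1 b ![q, r] = -c.1 ![(q : Q ⧸ N), r] + f q r := by
    rw [hb, ← hπ]; rfl
  rw [cochainD_one_apply] at hqr
  change b ![r] - b ![q * r] + b ![q] = _ at hqr
  rw [hqr]
  abel

section CentralExtension

variable {G : Type*} [Group G] (A : Subgroup G) [A.Normal]

/- With the section `Quotient.out` of `G → G ⧸ A`, every `g` is
`cosetOffset A g * (g : G ⧸ A).out`, and `factorSet A` is the factor set of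
`A → G → G ⧸ A`. -/
noncomputable def cosetOffset (g : G) : A :=
  ⟨g * (g : G ⧸ A).out⁻¹, (QuotientGroup.eq_one_iff _).mp (by simp)⟩

noncomputable def factorSet (q r : G ⧸ A) : A :=
  ⟨q.out * r.out * (q * r).out⁻¹, (QuotientGroup.eq_one_iff _).mp (by simp)⟩

variable {A}

lemma cosetOffset_of_mem {a : G} (ha : a ∈ A) :
    cosetOffset A a = ⟨a, ha⟩ * cosetOffset A 1 := by
  ext
  simp [cosetOffset, (QuotientGroup.eq_one_iff a).mpr ha]

lemma cosetOffset_mul (hA : A ≤ Subgroup.center G) (g h : G) :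
    cosetOffset A (g * h) = cosetOffset A g * cosetOffset A h * factorSet A g h := by
  ext
  have hcomm := Subgroup.mem_center_iff.mp (hA (cosetOffset A h).2) (g : G ⧸ A).out⁻¹
  simp only [cosetOffset, factorSet, Subgroup.coe_mul, QuotientGroup.mk_mul] at hcomm ⊢
  rw [mul_assoc g (Quotient.out _)⁻¹, hcomm]
  group

lemma factorSet_mul_factorSet (hA : A ≤ Subgroup.center G) (q r t : G ⧸ A) :
    factorSet A q r * factorSet A (q * r) t = factorSet A r t * factorSet A q (r * t) := by
  ext
  have hcomm := Subgroup.mem_center_iff.mp (hA (factorSet A r t).2) q.out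
  simp only [factorSet, Subgroup.coe_mul] at hcomm ⊢
  rw [mul_assoc q r t]
  calc _ = q.out * (r.out * t.out * (r * t).out⁻¹) *
          ((r * t).out * (q * (r * t)).out⁻¹) := by group
    _ = _ := by rw [hcomm]; group

variable {M : Type*} [CommGroup M]

lemma isTwoCocycle_factorSet (hA : A ≤ Subgroup.center G) (μ : A →* M) :
    IsTwoCocycle fun q r => Additive.ofMul (μ (factorSet A q r)) := by
  intro q r t
  have h := congrArg (fun a => Additive.ofMul (μ a)) (factorSet_mul_factorSet hA q r t)
  simp only [map_mul, ofMul_mul] at h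
  exact (add_comm _ _).trans h

variable {N : Subgroup (G ⧸ A)} [N.Normal]
  {c : (G ⧸ A) ⧸ N → (G ⧸ A) ⧸ N → Additive M} (hc : IsTwoCocycle c)
  (hA : A ≤ Subgroup.center G) (μ : A →* M) (b : G ⧸ A → Additive M)
  (hcb : ∀ q r, Additive.ofMul (μ (factorSet A q r)) = c q r + (b r - b (q * r) + b q))

noncomputable def toCocycleExt : G →* CocycleExt c hc :=
  MonoidHom.mk'
    (fun g => (Additive.ofMul (μ (cosetOffset A g)) + b g, ((g : G ⧸ A) : (G ⧸ A) ⧸ N)))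
    fun g h => by
      refine Prod.ext ?_ rfl
      change Additive.ofMul (μ (cosetOffset A (g * h))) + b (g * h) =
        Additive.ofMul (μ (cosetOffset A g)) + b g +
          (Additive.ofMul (μ (cosetOffset A h)) + b h) + c g h
      rw [cosetOffset_mul hA, map_mul μ, map_mul μ, ofMul_mul, ofMul_mul, hcb]
      abel

lemma ker_toCocycleExt_subgroupOf_le :
    (toCocycleExt hc hA μ b hcb).ker.subgroupOf A ≤ μ.ker := by
  intro a ha
  have h := congrArg Prod.fst
    ((Subgroup.mem_subgroupOf.mp ha).trans (map_one (toCocycleExt hc hA μ b hcb)).symm)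
  change Additive.ofMul (μ (cosetOffset A a)) + b ((a : G) : G ⧸ A) =
    Additive.ofMul (μ (cosetOffset A 1)) + b ((1 : G) : G ⧸ A) at h
  rw [(QuotientGroup.eq_one_iff _).mpr a.2, cosetOffset_of_mem a.2, map_mul, ofMul_mul,
    QuotientGroup.mk_one, add_assoc, add_eq_right] at h
  exact h

end CentralExtension

lemma exists_index_ker_eq_pow {p : ℕ} (hp : p.Prime) {G E : Type*} [Group G] [Group E] {k : ℕ}
    (hE : Nat.card E = p ^ k) (φ : G →* E) : ∃ j, φ.ker.index = p ^ j := by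
  obtain ⟨j, -, hj⟩ :=
    (Nat.dvd_prime_pow hp).mp (hE ▸ Subgroup.card_subgroup_dvd_card φ.range)
  exact ⟨j, by rw [Subgroup.index_ker, hj]⟩

theorem InGp.exists_normal_pPowIndex_subgroupOf_le_ker {p : ℕ} (hp : p.Prime) {G : Type u}
    [Group G] {A : Subgroup G} [A.Normal] (hA : A ≤ Subgroup.center G) (hQ : InGp p (G ⧸ A))
    {M : Type u} [CommGroup M] (hM : ∃ k, Nat.card M = p ^ k) (μ : A →* M) :
    ∃ L : Subgroup G, L.Normal ∧ (∃ k, L.index = p ^ k) ∧ L.subgroupOf A ≤ μ.ker := by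
  obtain ⟨N, _, ⟨k, hN⟩, c, hc, b, hcb⟩ :=
    hQ.exists_eq_inflation_add_coboundary (M := Additive M) hM (isTwoCocycle_factorSet hA μ)
  obtain ⟨m, hm⟩ := hM
  have hcard : Nat.card (CocycleExt c hc) = p ^ (m + k) := by
    rw [CocycleExt.card, pow_add, ← hm, ← hN]; rfl
  let φ := toCocycleExt hc hA μ b hcb
  exact ⟨φ.ker, φ.normal_ker, exists_index_ker_eq_pow hp hcard φ,
    ker_toCocycleExt_subgroupOf_le hc hA μ b hcb⟩

/-- Lemma 2.8: if `A ≤ Z(G)` and `G/A ∈ 𝒢(p)`, then `A ≤_{t(p)} G`. -/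
theorem central_topPEmbedded (p : ℕ) (hp : p.Prime) (G : Type u) [Group G]
    (A : Subgroup G) (hA : A ≤ Subgroup.center G)
    (hQ : haveI := normal_of_le_center hA; InGp p (G ⧸ A)) : TopPEmbedded p A := by
  have := normal_of_le_center hA
  intro K _ ⟨k, hK⟩
  have : IsMulCommutative A :=
    Subgroup.le_centralizer_iff_isMulCommutative.mp (hA.trans (Subgroup.center_le_centralizer _))
  open scoped IsMulCommutative in
  obtain ⟨L, hL, hidx, hLK⟩ :=
    hQ.exists_normal_pPowIndex_subgroupOf_le_ker hp hA ⟨k, hK⟩ (QuotientGroup.mk' K)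
  exact ⟨L, hL, hidx, hLK.trans (QuotientGroup.ker_mk' K).le⟩

end GoodProfinite
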